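/- arXiv:1408.1042 — 7 statements merged into one kernel-verified Lean document; each statement's English description precedes it below -/
import Mathlib

section
/- If q and r are smooth complex-valued functions of (x,t) satisfying the coupled equations i q_t + q_xx + i q r q_x = 0 and i r_t − r_xx + i r q r_x = 0, then the local conservation law ∂_t( (i/2) q r ) = −∂_x( (i/4) q² r² − (1/2) q r_x + (1/2) r q_x ) holds. -/
open Complex

/-- Partial derivative in the first (space) variable. -/
noncomputable def px (q : ℝ → ℝ → ℂ) : ℝ → ℝ → ℂ :=
  fun x t => deriv (fun x' => q x' t) x

/-- Partial derivative in the second (time) variable. -/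
noncomputable def pt (q : ℝ → ℝ → ℂ) : ℝ → ℝ → ℂ :=
  fun x t => deriv (fun t' => q x t') t

lemma hasDerivAt_slice_x {q : ℝ → ℝ → ℂ}
    (hq : ContDiff ℝ (⊤ : ℕ∞) (fun p : ℝ × ℝ => q p.1 p.2)) (x t : ℝ) :
    HasDerivAt (fun x' => q x' t)
      (fderiv ℝ (fun p : ℝ × ℝ => q p.1 p.2) (x, t) (1, 0)) x := by
  have h1 : HasDerivAt (fun x' : ℝ => ((x', t) : ℝ × ℝ)) ((1 : ℝ), (0 : ℝ)) x :=
    (hasDerivAt_id x).prodMk (hasDerivAt_const x t)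
  exact ((hq.differentiable (by simp) (x, t)).hasFDerivAt).comp_hasDerivAt x h1

lemma hasDerivAt_slice_t {q : ℝ → ℝ → ℂ}
    (hq : ContDiff ℝ (⊤ : ℕ∞) (fun p : ℝ × ℝ => q p.1 p.2)) (x t : ℝ) :
    HasDerivAt (fun t' => q x t')
      (fderiv ℝ (fun p : ℝ × ℝ => q p.1 p.2) (x, t) (0, 1)) t := by
  have h1 : HasDerivAt (fun t' : ℝ => ((x, t') : ℝ × ℝ)) ((0 : ℝ), (1 : ℝ)) t :=
    (hasDerivAt_const t x).prodMk (hasDerivAt_id t)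
  exact ((hq.differentiable (by simp) (x, t)).hasFDerivAt).comp_hasDerivAt t h1

lemma hasDerivAt_px {q : ℝ → ℝ → ℂ}
    (hq : ContDiff ℝ (⊤ : ℕ∞) (fun p : ℝ × ℝ => q p.1 p.2)) (x t : ℝ) :
    HasDerivAt (fun x' => q x' t) (px q x t) x := by
  have h := hasDerivAt_slice_x hq x t
  have h2 : px q x t = _ := h.deriv
  rw [h2]; exact h

lemma hasDerivAt_pt {q : ℝ → ℝ → ℂ}
    (hq : ContDiff ℝ (⊤ : ℕ∞) (fun p : ℝ × ℝ => q p.1 p.2)) (x t : ℝ) :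
    HasDerivAt (fun t' => q x t') (pt q x t) t := by
  have h := hasDerivAt_slice_t hq x t
  have h2 : pt q x t = _ := h.deriv
  rw [h2]; exact h

lemma contDiff_px {q : ℝ → ℝ → ℂ}
    (hq : ContDiff ℝ (⊤ : ℕ∞) (fun p : ℝ × ℝ => q p.1 p.2)) :
    ContDiff ℝ (⊤ : ℕ∞) (fun p : ℝ × ℝ => px q p.1 p.2) := by
  have heq : (fun p : ℝ × ℝ => px q p.1 p.2)
      = fun p : ℝ × ℝ => fderiv ℝ (fun p : ℝ × ℝ => q p.1 p.2) p ((1 : ℝ), (0 : ℝ)) := by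
    funext p
    exact (hasDerivAt_slice_x hq p.1 p.2).deriv
  rw [heq]
  exact (hq.fderiv_right (by simp)).clm_apply contDiff_const

/-- Local conservation law for the coupled DNLSII equations. -/
theorem dnlsII_conservation_law (q r : ℝ → ℝ → ℂ)
    (hq : ContDiff ℝ (⊤ : ℕ∞) (fun p : ℝ × ℝ => q p.1 p.2))
    (hr : ContDiff ℝ (⊤ : ℕ∞) (fun p : ℝ × ℝ => r p.1 p.2))
    (heq1 : ∀ x t, Complex.I * pt q x t + px (px q) x t
      + Complex.I * q x t * r x t * px q x t = 0)
    (heq2 : ∀ x t, Complex.I * pt r x t - px (px r) x t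
      + Complex.I * r x t * q x t * px r x t = 0) :
    ∀ x t, pt (fun x' t' => (Complex.I / 2) * q x' t' * r x' t') x t
      = - px (fun x' t' => (Complex.I / 4) * (q x' t')^2 * (r x' t')^2
          - (1/2) * q x' t' * px r x' t' + (1/2) * r x' t' * px q x' t') x t := by
  intro x t
  have hqt := hasDerivAt_pt hq x t
  have hrt := hasDerivAt_pt hr x t
  have hqx := hasDerivAt_px hq x t
  have hrx := hasDerivAt_px hr x t
  have hqxx := hasDerivAt_px (contDiff_px hq) x t
  have hrxx := hasDerivAt_px (contDiff_px hr) x t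
  have hL : pt (fun x' t' => (Complex.I / 2) * q x' t' * r x' t') x t
      = (Complex.I / 2) * pt q x t * r x t + (Complex.I / 2) * q x t * pt r x t := by
    have h := ((hqt.const_mul (Complex.I / 2)).mul hrt).deriv
    simp only [pt] at h ⊢
    exact h
  have hR : px (fun x' t' => (Complex.I / 4) * (q x' t')^2 * (r x' t')^2
          - (1/2) * q x' t' * px r x' t' + (1/2) * r x' t' * px q x' t') x t
      = (Complex.I / 2) * q x t * r x t * (px q x t * r x t + q x t * px r x t)
        - (1/2) * (px q x t * px r x t + q x t * px (px r) x t)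
        + (1/2) * (px r x t * px q x t + r x t * px (px q) x t) := by
    have h1 := (((hqx.mul hqx).const_mul (Complex.I / 4)).mul (hrx.mul hrx))
    have h2 := (hqx.const_mul ((1:ℂ)/2)).mul hrxx
    have h3 := (hrx.const_mul ((1:ℂ)/2)).mul hqxx
    have h := ((h1.sub h2).add h3).deriv
    have hfun : (fun x' => (Complex.I / 4) * (q x' t)^2 * (r x' t)^2
          - (1/2) * q x' t * px r x' t + (1/2) * r x' t * px q x' t)
        = (fun x' => (Complex.I / 4) * (q x' t * q x' t) * (r x' t * r x' t)
          - (1/2) * q x' t * px r x' t + (1/2) * r x' t * px q x' t) := by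
      funext y; ring
    show deriv (fun x' => (Complex.I / 4) * (q x' t)^2 * (r x' t)^2
          - (1/2) * q x' t * px r x' t + (1/2) * r x' t * px q x' t) x = _
    rw [hfun]; exact h.trans (by simp only [Pi.mul_apply]; ring)
  rw [hL, hR]
  linear_combination (r x t / 2) * heq1 x t + (q x t / 2) * heq2 x t
end

section
/- Let λ ∈ ℂ, q(x,t) = c exp(i ρ) with ρ = a x + b t, b = −a² − c² a, r = q*, and s = √(4a² + 16aλ² − 4c²a + 16λ⁴ + 8λ²c² + c⁴). Then the vector function Ψ₁ = ( ((2ia + 4iλ² − ic² + is)/(4λ)) exp( i( ρ/2 − (s/4)x + ((2a + c² − 4λ²)s/8) t ) ), c exp( i( −ρ/2 − (s/4)x + ((2a + c² − 4λ²)s/8) t ) ) ) satisfies the x-part of the Lax pair Φ_x = ( −iλ² + (i/4) q r ) J Φ + λ Q Φ, where J = diag(1,−1) and Q = [[0, q],[−r, 0]]. -/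
open Complex ComplexConjugate

/-!
Every component is a plane wave in `x`, so `∂ₓ` acts on it as multiplication by its
wave number. Since `r = c e^{-iρ}`, the products `q r`, `q g`, `r f` collapse to `c²` and to
multiples of the phases of `f` and `g`; the two rows of the Lax equation thus reduce to two
algebraic identities for the amplitude `K = i(2a + 4λ² − c² + s)/(4λ)`. The first is where
the choice of `s` enters: `(2a + 4λ² − c²)² − s² = −16λ²c²`.
-/

lemma hasDerivAt_const_mul_exp_mul_ofReal_add (K u v : ℂ) (x : ℝ) :
    HasDerivAt (fun x' : ℝ => K * exp (u * x' + v)) (u * (K * exp (u * x + v))) x :=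
  ((((hasDerivAt_id x).ofReal_comp).const_mul u).add_const v).cexp.const_mul K
    |>.congr_deriv (by simp only [id, ofReal_one, mul_one]; ring)

lemma px_eq_mul_of_eq_const_mul_exp {f : ℝ → ℝ → ℂ} {t : ℝ} {K u v : ℂ}
    (hf : ∀ x, f x t = K * exp (u * x + v)) (x : ℝ) : px f x t = u * f x t := by
  rw [px, funext hf, (hasDerivAt_const_mul_exp_mul_ofReal_add K u v x).deriv, hf]

lemma conj_ofReal_mul_exp_I_mul_ofReal (c θ : ℝ) :
    conj ((c : ℂ) * exp (I * θ)) = c * exp (-(I * θ)) := by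
  rw [map_mul, conj_ofReal, ← exp_conj, map_mul, conj_I, conj_ofReal, neg_mul]

section SeedAmplitude

variable {a c lam s K : ℂ}

lemma seed_amplitude_first_row (hlam : lam ≠ 0)
    (hK : K * (4 * lam) = I * (2 * a + 4 * lam ^ 2 - c ^ 2 + s))
    (hs : s ^ 2 = 4 * a ^ 2 + 16 * a * lam ^ 2 - 4 * c ^ 2 * a
      + 16 * lam ^ 4 + 8 * lam ^ 2 * c ^ 2 + c ^ 4) :
    I * (a / 2 - s / 4) * K = (-I * lam ^ 2 + I / 4 * c ^ 2) * K + lam * c ^ 2 := by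
  apply mul_left_cancel₀ hlam
  linear_combination (I * (a / 2 - s / 4 + lam ^ 2 - c ^ 2 / 4) / 4) * hK - I ^ 2 / 16 * hs
    - lam ^ 2 * c ^ 2 * I_sq

lemma seed_amplitude_second_row
    (hK : K * (4 * lam) = I * (2 * a + 4 * lam ^ 2 - c ^ 2 + s)) :
    I * (-a / 2 - s / 4) = -(-I * lam ^ 2 + I / 4 * c ^ 2) - lam * K := by
  linear_combination hK / 4

end SeedAmplitude

theorem periodic_seed_eigenfunction_x_part_general (a b c : ℝ) (lam s : ℂ)
    (hlam : lam ≠ 0)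
    (hs : s^2 = 4 * (a:ℂ)^2 + 16 * (a:ℂ) * lam^2 - 4 * (c:ℂ)^2 * (a:ℂ)
      + 16 * lam^4 + 8 * lam^2 * (c:ℂ)^2 + (c:ℂ)^4)
    (q r f g : ℝ → ℝ → ℂ)
    (hq : ∀ x t, q x t = (c : ℂ) * Complex.exp (Complex.I * ((a:ℂ) * x + (b:ℂ) * t)))
    (hr : ∀ x t, r x t = conj (q x t))
    (hf : ∀ x t, f x t = ((2 * Complex.I * (a:ℂ) + 4 * Complex.I * lam^2
        - Complex.I * (c:ℂ)^2 + Complex.I * s) / (4 * lam)) *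
      Complex.exp (Complex.I * (((a:ℂ) * x + (b:ℂ) * t) / 2 - (s / 4) * x
        + ((2 * (a:ℂ) + (c:ℂ)^2 - 4 * lam^2) * s / 8) * t)))
    (hg : ∀ x t, g x t = (c : ℂ) *
      Complex.exp (Complex.I * (-((a:ℂ) * x + (b:ℂ) * t) / 2 - (s / 4) * x
        + ((2 * (a:ℂ) + (c:ℂ)^2 - 4 * lam^2) * s / 8) * t))) :
    ∀ x t,
      px f x t = (-Complex.I * lam^2 + (Complex.I / 4) * q x t * r x t) * f x t
        + lam * q x t * g x t ∧
      px g x t = -(-Complex.I * lam^2 + (Complex.I / 4) * q x t * r x t) * g x t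
        - lam * r x t * f x t := by
  intro x t
  set K := (2 * I * a + 4 * I * lam ^ 2 - I * c ^ 2 + I * s) / (4 * lam)
  set ω : ℂ := (2 * a + c ^ 2 - 4 * lam ^ 2) * s / 8
  have hpf : px f x t = I * (a / 2 - s / 4) * f x t :=
    px_eq_mul_of_eq_const_mul_exp (v := I * (b * t / 2 + ω * t))
      (fun x' => by rw [hf]; congr 2; ring) x
  have hpg : px g x t = I * (-a / 2 - s / 4) * g x t :=
    px_eq_mul_of_eq_const_mul_exp (v := I * (-b * t / 2 + ω * t))
      (fun x' => by rw [hg]; congr 2; ring) x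
  have hr' : r x t = c * exp (-(I * (a * x + b * t))) := by
    have := conj_ofReal_mul_exp_I_mul_ofReal c (a * x + b * t)
    push_cast at this
    rw [hr, hq, this]
  have hqr : q x t * r x t = c ^ 2 := by
    rw [hq, hr', mul_mul_mul_comm, ← exp_add, add_neg_cancel, exp_zero, mul_one, sq]
  have hqg : q x t * g x t = c ^ 2 * exp (I * ((a * x + b * t) / 2 - s / 4 * x + ω * t)) := by
    rw [hq, hg, mul_mul_mul_comm, ← exp_add, sq]
    ring_nf
  have hrf : r x t * f x t = K * g x t := by
    rw [hr', hf, hg, mul_mul_mul_comm, ← exp_add]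
    ring_nf
  have hK : K * (4 * lam) = I * (2 * a + 4 * lam ^ 2 - c ^ 2 + s) := by
    simp only [K]
    field_simp
  constructor
  · rw [hpf, mul_assoc (I / 4), hqr, mul_assoc lam, hqg, hf]
    linear_combination exp (I * ((a * x + b * t) / 2 - s / 4 * x + ω * t))
      * seed_amplitude_first_row hlam hK hs
  · rw [hpg, mul_assoc (I / 4), hqr, mul_assoc lam, hrf]
    linear_combination g x t * seed_amplitude_second_row hK

/-- The explicit vector function `Ψ₁ = (f, g)` built from the periodic seed
`q = c exp(iρ)`, `ρ = ax + bt`, `b = −a² − c²a`, `r = q*`, satisfies the `x`-part of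
the Lax pair `Φₓ = (−iλ² + (i/4) q r) J Φ + λ Q Φ` with `J = diag(1,−1)`,
`Q = [[0,q],[−r,0]]`. -/
theorem periodic_seed_eigenfunction_x_part (a b c : ℝ) (lam s : ℂ)
    (hlam : lam ≠ 0)
    (hb : b = -a^2 - c^2 * a)
    (hs : s^2 = 4 * (a:ℂ)^2 + 16 * (a:ℂ) * lam^2 - 4 * (c:ℂ)^2 * (a:ℂ)
      + 16 * lam^4 + 8 * lam^2 * (c:ℂ)^2 + (c:ℂ)^4)
    (q r f g : ℝ → ℝ → ℂ)
    (hq : ∀ x t, q x t = (c : ℂ) * Complex.exp (Complex.I * ((a:ℂ) * x + (b:ℂ) * t)))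
    (hr : ∀ x t, r x t = conj (q x t))
    (hf : ∀ x t, f x t = ((2 * Complex.I * (a:ℂ) + 4 * Complex.I * lam^2
        - Complex.I * (c:ℂ)^2 + Complex.I * s) / (4 * lam)) *
      Complex.exp (Complex.I * (((a:ℂ) * x + (b:ℂ) * t) / 2 - (s / 4) * x
        + ((2 * (a:ℂ) + (c:ℂ)^2 - 4 * lam^2) * s / 8) * t)))
    (hg : ∀ x t, g x t = (c : ℂ) *
      Complex.exp (Complex.I * (-((a:ℂ) * x + (b:ℂ) * t) / 2 - (s / 4) * x
        + ((2 * (a:ℂ) + (c:ℂ)^2 - 4 * lam^2) * s / 8) * t))) :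
    ∀ x t,
      px f x t = (-Complex.I * lam^2 + (Complex.I / 4) * q x t * r x t) * f x t
        + lam * q x t * g x t ∧
      px g x t = -(-Complex.I * lam^2 + (Complex.I / 4) * q x t * r x t) * g x t
        - lam * r x t * f x t :=
  periodic_seed_eigenfunction_x_part_general a b c lam s hlam hs q r f g hq hr hf hg
end

section
/- Let α₁, β₁ ∈ ℝ with α₁ β₁ ≠ 0, F₁ = 4 α₁ β₁ (4tα₁² − 4tβ₁² + x), and F₂ = 4α₁⁴ t − 24α₁² t β₁² + 2α₁² x + 4β₁⁴ t − 2β₁² x. Then q(x,t) = −4 α₁ β₁ exp(−i F₂) / ( α₁ cosh(F₁) + i β₁ sinh(F₁) ) satisfies the DNLSII equation i q_t + q_xx + i |q|² q_x = 0. -/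
open Complex

open ComplexConjugate

/-!
Seek `q` as a phase-modulated wave `e^{-i(kx + ωt)} P(gx + vt)`. With `v = 2gk` and
`ω = k² - g²` the first-order terms of `i q_t + q_xx` cancel, and DNLSII reduces to the
profile equation `g² (P'' - P) + |P|² (i g P' + k P) = 0`. For `P = -4αβ / D` with
`D = α cosh + iβ sinh` one has `D'' = D`, `D'² - D² = -(α² + β²)` and
`k D - i g D' = 2 (α² + β²) D̄` (for `g = 4αβ`, `k = 2(α² - β²)`), so the two terms of the
profile equation are `±128 α³β³ (α² + β²) / D³`.
-/

def SolvesDNLSII (q : ℝ → ℝ → ℂ) : Prop :=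
  ∀ x t, I * pt q x t + px (px q) x t + I * ((‖q x t‖ : ℝ) : ℂ) ^ 2 * px q x t = 0

noncomputable def phaseWave (P : ℝ → ℂ) (k ω g v : ℝ) (x t : ℝ) : ℂ :=
  cexp (-I * ((k * x + ω * t : ℝ) : ℂ)) * P (g * x + v * t)

section PhaseWave

variable {P P' P'' : ℝ → ℂ} {k ω g v : ℝ}

theorem hasDerivAt_phase_mul_comp (hP : ∀ u, HasDerivAt P (P' u) u)
    {φ ψ : ℝ → ℝ} {a b s : ℝ} (hφ : HasDerivAt φ a s) (hψ : HasDerivAt ψ b s) :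
    HasDerivAt (fun s => cexp (-I * (φ s : ℂ)) * P (ψ s))
      (cexp (-I * (φ s : ℂ)) * (b * P' (ψ s) - I * a * P (ψ s))) s := by
  have hphase := (hφ.ofReal_comp.const_mul (-I)).cexp
  have hprofile := (hP (ψ s)).scomp s hψ
  refine (hphase.mul hprofile).congr_deriv ?_
  simp only [Function.comp_apply, real_smul]
  ring

theorem px_phaseWave (hP : ∀ u, HasDerivAt P (P' u) u) :
    px (phaseWave P k ω g v) = phaseWave (fun u => g * P' u - I * k * P u) k ω g v := by
  funext x t
  have hφ : HasDerivAt (fun x => k * x + ω * t) k x := by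
    simpa using ((hasDerivAt_id x).const_mul k).add_const (ω * t)
  have hψ : HasDerivAt (fun x => g * x + v * t) g x := by
    simpa using ((hasDerivAt_id x).const_mul g).add_const (v * t)
  exact (hasDerivAt_phase_mul_comp hP hφ hψ).deriv

theorem pt_phaseWave (hP : ∀ u, HasDerivAt P (P' u) u) :
    pt (phaseWave P k ω g v) = phaseWave (fun u => v * P' u - I * ω * P u) k ω g v := by
  funext x t
  have hφ : HasDerivAt (fun t => k * x + ω * t) ω t := by
    simpa using ((hasDerivAt_id t).const_mul ω).const_add (k * x)
  have hψ : HasDerivAt (fun t => g * x + v * t) v t := by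
    simpa using ((hasDerivAt_id t).const_mul v).const_add (g * x)
  exact (hasDerivAt_phase_mul_comp hP hφ hψ).deriv

theorem norm_phaseWave (x t : ℝ) : ‖phaseWave P k ω g v x t‖ = ‖P (g * x + v * t)‖ := by
  simp [phaseWave, Complex.norm_exp]

theorem phaseWave_solvesDNLSII (hP : ∀ u, HasDerivAt P (P' u) u)
    (hP' : ∀ u, HasDerivAt P' (P'' u) u)
    (hode : ∀ u, (g : ℂ) ^ 2 * (P'' u - P u) + ‖P u‖ ^ 2 * (I * g * P' u + k * P u) = 0) :
    SolvesDNLSII (phaseWave P k (k ^ 2 - g ^ 2) g (2 * g * k)) := by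
  have hQ : ∀ u, HasDerivAt (fun u => g * P' u - I * k * P u) (g * P'' u - I * k * P' u) u :=
    fun u => ((hP' u).const_mul _).sub ((hP u).const_mul _)
  intro x t
  rw [px_phaseWave hP, px_phaseWave hQ, pt_phaseWave hP, norm_phaseWave]
  simp only [phaseWave]
  set u := g * x + 2 * g * k * t
  set e := cexp (-I * ((k * x + (k ^ 2 - g ^ 2) * t : ℝ) : ℂ))
  push_cast
  linear_combination e * hode u + e * P u * (g ^ 2 - k * ‖P u‖ ^ 2) * I_sq

end PhaseWave

noncomputable def solitonDen (α β u : ℝ) : ℂ :=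
  α * ((Real.cosh u : ℝ) : ℂ) + I * β * ((Real.sinh u : ℝ) : ℂ)

noncomputable def solitonDen' (α β u : ℝ) : ℂ :=
  α * ((Real.sinh u : ℝ) : ℂ) + I * β * ((Real.cosh u : ℝ) : ℂ)

noncomputable def solitonProfile (α β u : ℝ) : ℂ :=
  -4 * α * β / solitonDen α β u

theorem hasDerivAt_solitonDen (α β u : ℝ) :
    HasDerivAt (solitonDen α β) (solitonDen' α β u) u :=
  ((Real.hasDerivAt_cosh u).ofReal_comp.const_mul _).add
    ((Real.hasDerivAt_sinh u).ofReal_comp.const_mul _)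

theorem hasDerivAt_solitonDen' (α β u : ℝ) :
    HasDerivAt (solitonDen' α β) (solitonDen α β u) u :=
  ((Real.hasDerivAt_sinh u).ofReal_comp.const_mul _).add
    ((Real.hasDerivAt_cosh u).ofReal_comp.const_mul _)

theorem solitonDen_ne_zero {α : ℝ} (hα : α ≠ 0) (β u : ℝ) : solitonDen α β u ≠ 0 := by
  intro h
  have hre := congrArg re h
  simp [solitonDen] at hre
  exact hre.elim hα (Real.cosh_pos u).ne'

theorem solitonDen'_sq_sub_solitonDen_sq (α β u : ℝ) :
    solitonDen' α β u ^ 2 - solitonDen α β u ^ 2 = -(α ^ 2 + β ^ 2) := by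
  have h : ((Real.cosh u : ℝ) : ℂ) ^ 2 - ((Real.sinh u : ℝ) : ℂ) ^ 2 = 1 := by
    exact_mod_cast Real.cosh_sq_sub_sinh_sq u
  simp only [solitonDen, solitonDen']
  linear_combination (-(α : ℂ) ^ 2 + β ^ 2 * I ^ 2) * h + β ^ 2 * I_sq

theorem sq_add_sq_mul_conj_solitonDen (α β u : ℝ) :
    2 * (α ^ 2 + β ^ 2) * conj (solitonDen α β u)
      = 2 * (α ^ 2 - β ^ 2) * solitonDen α β u - I * (4 * α * β) * solitonDen' α β u := by
  simp only [solitonDen, solitonDen', map_add, map_mul, conj_ofReal, conj_I]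
  linear_combination (4 * α * β ^ 2 * ((Real.cosh u : ℝ) : ℂ)) * I_sq

theorem hasDerivAt_solitonProfile {α : ℝ} (hα : α ≠ 0) (β u : ℝ) :
    HasDerivAt (solitonProfile α β)
      (4 * α * β * solitonDen' α β u / solitonDen α β u ^ 2) u := by
  refine ((hasDerivAt_const u (-4 * α * β : ℂ)).div (hasDerivAt_solitonDen α β u)
    (solitonDen_ne_zero hα β u)).congr_deriv ?_
  ring

theorem hasDerivAt_solitonProfile_deriv {α : ℝ} (hα : α ≠ 0) (β u : ℝ) :
    HasDerivAt (fun u => 4 * α * β * solitonDen' α β u / solitonDen α β u ^ 2)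
      (4 * α * β * (solitonDen α β u ^ 2 - 2 * solitonDen' α β u ^ 2)
        / solitonDen α β u ^ 3) u := by
  have hD := solitonDen_ne_zero hα β u
  refine (((hasDerivAt_solitonDen' α β u).const_mul (4 * α * β : ℂ)).div
    ((hasDerivAt_solitonDen α β u).pow 2) (pow_ne_zero 2 hD)).congr_deriv ?_
  simp only [Pi.pow_apply]
  field_simp
  ring

theorem solitonProfile_ode {α : ℝ} (hα : α ≠ 0) (β u : ℝ) :
    ((4 * α * β : ℝ) : ℂ) ^ 2 * (4 * α * β * (solitonDen α β u ^ 2 - 2 * solitonDen' α β u ^ 2)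
        / solitonDen α β u ^ 3 - solitonProfile α β u)
      + ((‖solitonProfile α β u‖ : ℝ) : ℂ) ^ 2
        * (I * ((4 * α * β : ℝ) : ℂ) * (4 * α * β * solitonDen' α β u / solitonDen α β u ^ 2)
          + ((2 * (α ^ 2 - β ^ 2) : ℝ) : ℂ) * solitonProfile α β u) = 0 := by
  have hD := solitonDen_ne_zero hα β u
  have hDc : conj (solitonDen α β u) ≠ 0 := (map_ne_zero _).2 hD
  have hlinear : 4 * α * β * (solitonDen α β u ^ 2 - 2 * solitonDen' α β u ^ 2)
      / solitonDen α β u ^ 3 - solitonProfile α β u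
      = 8 * α * β * (α ^ 2 + β ^ 2) / solitonDen α β u ^ 3 := by
    rw [solitonProfile]
    field_simp
    linear_combination (-8 * α * β) * solitonDen'_sq_sub_solitonDen_sq α β u
  have hdrift : I * ((4 * α * β : ℝ) : ℂ) * (4 * α * β * solitonDen' α β u / solitonDen α β u ^ 2)
      + ((2 * (α ^ 2 - β ^ 2) : ℝ) : ℂ) * solitonProfile α β u
      = -4 * α * β * (2 * (α ^ 2 + β ^ 2) * conj (solitonDen α β u))
        / solitonDen α β u ^ 2 := by
    rw [sq_add_sq_mul_conj_solitonDen, solitonProfile]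
    push_cast
    field_simp
    ring
  have hnormSq : ((‖solitonProfile α β u‖ : ℝ) : ℂ) ^ 2
      = (4 * α * β) ^ 2 / (solitonDen α β u * conj (solitonDen α β u)) := by
    rw [← mul_conj', solitonProfile, map_div₀]
    simp only [map_mul, map_neg, map_ofNat, conj_ofReal]
    field_simp
  rw [hlinear, hdrift, hnormSq]
  push_cast
  field_simp
  ring

/-- The single-soliton `q = −4α₁β₁ e^{−iF₂}/(α₁ cosh F₁ + iβ₁ sinh F₁)` solves the
DNLSII equation `i q_t + q_xx + i |q|² q_x = 0`. -/
theorem single_soliton_solves_dnlsII (α₁ β₁ : ℝ) (hαβ : α₁ * β₁ ≠ 0)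
    (F₁ F₂ : ℝ → ℝ → ℝ) (q : ℝ → ℝ → ℂ)
    (hF₁ : ∀ x t, F₁ x t = 4 * α₁ * β₁ * (4 * t * α₁^2 - 4 * t * β₁^2 + x))
    (hF₂ : ∀ x t, F₂ x t = 4 * α₁^4 * t - 24 * α₁^2 * t * β₁^2 + 2 * α₁^2 * x
      + 4 * β₁^4 * t - 2 * β₁^2 * x)
    (hq : ∀ x t, q x t = (-4 * (α₁:ℂ) * (β₁:ℂ) * Complex.exp (-Complex.I * (F₂ x t : ℝ)))
      / ((α₁:ℂ) * (Real.cosh (F₁ x t) : ℝ) + Complex.I * (β₁:ℂ) * (Real.sinh (F₁ x t) : ℝ))) :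
    ∀ x t, Complex.I * pt q x t + px (px q) x t
      + Complex.I * ((‖q x t‖ : ℝ) : ℂ)^2 * px q x t = 0 := by
  have hα : α₁ ≠ 0 := left_ne_zero_of_mul hαβ
  set g := 4 * α₁ * β₁
  set k := 2 * (α₁ ^ 2 - β₁ ^ 2)
  have hwave : q = phaseWave (solitonProfile α₁ β₁) k (k ^ 2 - g ^ 2) g (2 * g * k) := by
    funext x t
    have hF₁' : F₁ x t = g * x + 2 * g * k * t := by rw [hF₁]; ring
    have hF₂' : F₂ x t = k * x + (k ^ 2 - g ^ 2) * t := by rw [hF₂]; ring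
    rw [hq, hF₁', hF₂', phaseWave, solitonProfile, solitonDen]
    ring
  subst hwave
  exact phaseWave_solvesDNLSII (hasDerivAt_solitonProfile hα β₁)
    (hasDerivAt_solitonProfile_deriv hα β₁) (solitonProfile_ode hα β₁)
end

section
/- For β₁ ∈ ℝ, β₁ ≠ 0, the rational function q(x,t) = 4β₁ exp( −2 i β₁² (2tβ₁² − x) ) / ( 1 + 4 i β₁² x − 16 i β₁⁴ t ) satisfies the DNLSII equation i q_t + q_xx + i |q|² q_x = 0 wherever the denominator is nonzero. -/
/-!
Write `q = c · exp(iκx − iκ²t) / D` with the affine denominator `D = 1 + 2iκx − 4iκ²t`.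
Since `Re D = 1` we have `conj D = 2 − D`, so `|q|² = |c|² / (D(2 − D))`, and every
derivative of `q` is `q` times a rational function of `D`. The DNLSII equation thus becomes
a rational identity in `D`, which holds whenever `|c|² = 8κ`; the rational soliton is
the case `κ = 2β₁²`, `c = 4β₁`.
-/

open Complex

open ComplexConjugate

theorem HasDerivAt.const_mul_cexp_div {𝕜 : Type*} [NontriviallyNormedField 𝕜]
    [NormedAlgebra 𝕜 ℂ] {f g : 𝕜 → ℂ} {f' g' : ℂ} {s : 𝕜} (c : ℂ)
    (hf : HasDerivAt f f' s) (hg : HasDerivAt g g' s) (hg0 : g s ≠ 0) :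
    HasDerivAt (fun s => c * Complex.exp (f s) / g s)
      (c * Complex.exp (f s) / g s * (f' - g' / g s)) s := by
  refine ((hf.cexp.const_mul c).div hg hg0).congr_deriv ?_
  field_simp

theorem hasDerivAt_const_add_mul_ofReal (a b : ℂ) (s : ℝ) :
    HasDerivAt (fun s : ℝ => a + b * s) b s := by
  simpa using ((hasDerivAt_id s).ofReal_comp.const_mul b).const_add a

namespace RationalSoliton

variable (κ : ℝ) (c : ℂ)

noncomputable def phase (x t : ℝ) : ℂ := I * κ * x - I * κ ^ 2 * t

noncomputable def denom (x t : ℝ) : ℂ := 1 + 2 * I * κ * x - 4 * I * κ ^ 2 * t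

noncomputable def sol (x t : ℝ) : ℂ := c * exp (phase κ x t) / denom κ x t

theorem re_denom (x t : ℝ) : (denom κ x t).re = 1 := by
  simp [denom, ← ofReal_pow]

theorem denom_ne_zero (x t : ℝ) : denom κ x t ≠ 0 := fun h => by
  simpa [h] using re_denom κ x t

theorem conj_denom (x t : ℝ) : conj (denom κ x t) = 2 - denom κ x t := by
  simp only [denom, map_sub, map_add, map_mul, map_one, map_ofNat, map_pow, conj_I, conj_ofReal]
  ring

theorem sq_norm_denom (x t : ℝ) :
    ((‖denom κ x t‖ : ℝ) : ℂ) ^ 2 = denom κ x t * (2 - denom κ x t) := by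
  rw [← mul_conj', conj_denom]

theorem norm_sol (x t : ℝ) : ‖sol κ c x t‖ = ‖c‖ / ‖denom κ x t‖ := by
  simp [sol, phase, norm_exp, ← ofReal_pow]

theorem hasDerivAt_phase_x (x t : ℝ) : HasDerivAt (fun x => phase κ x t) (I * κ) x := by
  convert hasDerivAt_const_add_mul_ofReal (-(I * κ ^ 2 * t)) (I * κ) x using 1
  ext; simp only [phase]; ring

theorem hasDerivAt_denom_x (x t : ℝ) : HasDerivAt (fun x => denom κ x t) (2 * I * κ) x := by
  convert hasDerivAt_const_add_mul_ofReal (1 - 4 * I * κ ^ 2 * t) (2 * I * κ) x using 1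
  ext; simp only [denom]; ring

theorem hasDerivAt_phase_t (x t : ℝ) : HasDerivAt (fun t => phase κ x t) (-I * κ ^ 2) t := by
  convert hasDerivAt_const_add_mul_ofReal (I * κ * x) (-I * κ ^ 2) t using 1
  ext; simp only [phase]; ring

theorem hasDerivAt_denom_t (x t : ℝ) :
    HasDerivAt (fun t => denom κ x t) (-4 * I * κ ^ 2) t := by
  convert hasDerivAt_const_add_mul_ofReal (1 + 2 * I * κ * x) (-4 * I * κ ^ 2) t using 1
  ext; simp only [denom]; ring

theorem hasDerivAt_sol_x (x t : ℝ) :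
    HasDerivAt (fun x => sol κ c x t) (sol κ c x t * (I * κ - 2 * I * κ / denom κ x t)) x :=
  HasDerivAt.const_mul_cexp_div c (hasDerivAt_phase_x κ x t) (hasDerivAt_denom_x κ x t)
    (denom_ne_zero κ x t)

theorem hasDerivAt_sol_t (x t : ℝ) :
    HasDerivAt (fun t => sol κ c x t)
      (sol κ c x t * (-I * κ ^ 2 + 4 * I * κ ^ 2 / denom κ x t)) t :=
  (HasDerivAt.const_mul_cexp_div c (hasDerivAt_phase_t κ x t) (hasDerivAt_denom_t κ x t)
    (denom_ne_zero κ x t)).congr_deriv (by simp only [sol]; ring)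

theorem px_sol : px (sol κ c) = fun x t => sol κ c x t * (I * κ - 2 * I * κ / denom κ x t) := by
  ext x t
  exact (hasDerivAt_sol_x κ c x t).deriv

theorem pt_sol (x t : ℝ) :
    pt (sol κ c) x t = sol κ c x t * (-I * κ ^ 2 + 4 * I * κ ^ 2 / denom κ x t) :=
  (hasDerivAt_sol_t κ c x t).deriv

theorem px_px_sol (x t : ℝ) :
    px (px (sol κ c)) x t =
      sol κ c x t * ((I * κ - 2 * I * κ / denom κ x t) ^ 2 - 4 * κ ^ 2 / denom κ x t ^ 2) := by
  have hD := denom_ne_zero κ x t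
  have hfactor : HasDerivAt (fun x => I * κ - 2 * I * κ / denom κ x t)
      (-4 * κ ^ 2 / denom κ x t ^ 2) x := by
    refine (((hasDerivAt_const x (2 * I * κ)).div (hasDerivAt_denom_x κ x t) hD).const_sub
      (I * κ)).congr_deriv ?_
    linear_combination (4 * κ ^ 2 / denom κ x t ^ 2) * I_sq
  rw [px_sol]
  refine ((hasDerivAt_sol_x κ c x t).mul hfactor).deriv.trans ?_
  ring

theorem sol_solves_dnlsII (hc : ‖c‖ ^ 2 = 8 * κ) (x t : ℝ) :
    I * pt (sol κ c) x t + px (px (sol κ c)) x t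
      + I * ((‖sol κ c x t‖ : ℝ) : ℂ) ^ 2 * px (sol κ c) x t = 0 := by
  have hD := denom_ne_zero κ x t
  have hD' : 2 - denom κ x t ≠ 0 := by rw [← conj_denom]; simpa using hD
  have hc' : ((‖c‖ : ℝ) : ℂ) ^ 2 = 8 * κ := by exact_mod_cast hc
  rw [pt_sol, px_px_sol, px_sol, norm_sol, ofReal_div, div_pow, sq_norm_denom, hc']
  field_simp
  ring_nf
  simp only [I_sq]
  ring

end RationalSoliton

theorem rational_soliton_solves_dnlsII_general (β₁ : ℝ) (q : ℝ → ℝ → ℂ)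
    (hq : ∀ x t, q x t =
      4 * (β₁:ℂ) * Complex.exp (-2 * Complex.I * (β₁:ℂ)^2 * (2 * (t:ℂ) * (β₁:ℂ)^2 - (x:ℂ)))
        / (1 + 4 * Complex.I * (β₁:ℂ)^2 * (x:ℂ) - 16 * Complex.I * (β₁:ℂ)^4 * (t:ℂ))) :
    ∀ x t : ℝ,
      (1 + 4 * Complex.I * (β₁:ℂ)^2 * (x:ℂ) - 16 * Complex.I * (β₁:ℂ)^4 * (t:ℂ)) ≠ 0 →
      Complex.I * pt q x t + px (px q) x t
        + Complex.I * ((‖q x t‖ : ℝ) : ℂ)^2 * px q x t = 0 := by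
  have hsol : q = RationalSoliton.sol (2 * β₁ ^ 2) (4 * β₁) := by
    ext x t
    rw [hq]
    simp only [RationalSoliton.sol, RationalSoliton.phase, RationalSoliton.denom]
    push_cast
    ring_nf
  have hamplitude : ‖(4 * β₁ : ℂ)‖ ^ 2 = 8 * (2 * β₁ ^ 2) := by
    simp only [norm_mul, Complex.norm_ofNat, norm_real, Real.norm_eq_abs, mul_pow, sq_abs]
    ring
  intro x t _
  rw [hsol]
  exact RationalSoliton.sol_solves_dnlsII _ _ hamplitude x t

/-- The rational single-soliton
`q = 4β₁ exp(−2iβ₁²(2tβ₁² − x)) / (1 + 4iβ₁²x − 16iβ₁⁴t)` solves the DNLSII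
equation wherever the denominator is nonzero. -/
theorem rational_soliton_solves_dnlsII (β₁ : ℝ) (hβ : β₁ ≠ 0) (q : ℝ → ℝ → ℂ)
    (hq : ∀ x t, q x t =
      4 * (β₁:ℂ) * Complex.exp (-2 * Complex.I * (β₁:ℂ)^2 * (2 * (t:ℂ) * (β₁:ℂ)^2 - (x:ℂ)))
        / (1 + 4 * Complex.I * (β₁:ℂ)^2 * (x:ℂ) - 16 * Complex.I * (β₁:ℂ)^4 * (t:ℂ))) :
    ∀ x t : ℝ,
      (1 + 4 * Complex.I * (β₁:ℂ)^2 * (x:ℂ) - 16 * Complex.I * (β₁:ℂ)^4 * (t:ℂ)) ≠ 0 →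
      Complex.I * pt q x t + px (px q) x t
        + Complex.I * ((‖q x t‖ : ℝ) : ℂ)^2 * px q x t = 0 :=
  rational_soliton_solves_dnlsII_general β₁ q hq
end

section
/- Let α₁, β₁ ∈ ℝ with β₁ ≠ 0 and define L₁ and L₂ as the explicit polynomials L₁ = 16iβ₁⁴x² + 16iα₁²β₁²x² − 128iβ₁⁶xt + 128iβ₁²α₁⁴xt + 8β₁²x + 96tα₁²β₁² + 256iβ₁²t²α₁⁶ − 3i + 256iβ₁⁸t² and L₂ = 16iα₁²β₁²x² + 16iβ₁⁴x² + 128iβ₁²α₁⁴xt − 128iβ₁⁶xt − 8β₁²x + 256iβ₁²t²α₁⁶ + 256iβ₁⁸t² − 32tα₁²β₁² + i + 64tβ₁⁴. Then the function q(x,t) = −(L₁/L₂)·2β₁ exp( −2iα₁²(x + 2tα₁² − 4tβ₁²) ) satisfies the DNLSII equation i q_t + q_xx + i|q|² q_x = 0 wherever L₂ ≠ 0. -/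
/-!
Write `q = (N / D) · e^{i(kx + ωt)}` with `N = -2β₁ L₁`, `D = L₂` (quadratic in `(x, t)`),
`k = -2α₁²` and `ω = -2α₁²(2α₁² - 4β₁²)`. Each derivative of `q` is again a rational function
times the same unimodular plane wave, and `|q|² = N N̄ / (D D̄)`. Hence the DNLSII residual is
`e^{i(kx + ωt)} / (D³ D̄)` times a polynomial in `x, t, α₁, β₁`, and that polynomial vanishes
identically.
-/

open Complex

structure BivariateQuadratic where
  cxx : ℂ
  cxt : ℂ
  ctt : ℂ
  cx : ℂ
  ct : ℂ
  c0 : ℂ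

namespace BivariateQuadratic

def eval (Q : BivariateQuadratic) (x t : ℝ) : ℂ :=
  Q.cxx * x ^ 2 + Q.cxt * x * t + Q.ctt * t ^ 2 + Q.cx * x + Q.ct * t + Q.c0

def dx (Q : BivariateQuadratic) : BivariateQuadratic := ⟨0, 0, 0, 2 * Q.cxx, Q.cxt, Q.cx⟩

def dt (Q : BivariateQuadratic) : BivariateQuadratic := ⟨0, 0, 0, Q.cxt, 2 * Q.ctt, Q.ct⟩

def conj (Q : BivariateQuadratic) : BivariateQuadratic :=
  ⟨starRingEnd ℂ Q.cxx, starRingEnd ℂ Q.cxt, starRingEnd ℂ Q.ctt, starRingEnd ℂ Q.cx,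
    starRingEnd ℂ Q.ct, starRingEnd ℂ Q.c0⟩

theorem starRingEnd_eval (Q : BivariateQuadratic) (x t : ℝ) :
    starRingEnd ℂ (Q.eval x t) = Q.conj.eval x t := by
  simp only [eval, conj, map_add, map_mul, map_pow, conj_ofReal]

theorem hasDerivAt_eval_fst (Q : BivariateQuadratic) (x t : ℝ) :
    HasDerivAt (fun y => Q.eval y t) (Q.dx.eval x t) x := by
  have hy : HasDerivAt (fun y : ℝ => (y : ℂ)) 1 x := (hasDerivAt_id x).ofReal_comp
  have h := (((((hy.pow 2).const_mul Q.cxx).add ((hy.const_mul Q.cxt).mul_const (t : ℂ))).add_const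
    (Q.ctt * t ^ 2)).add (hy.const_mul Q.cx)).add_const (Q.ct * t) |>.add_const Q.c0
  exact h.congr_deriv (by simp only [eval, dx]; push_cast; ring)

theorem hasDerivAt_eval_snd (Q : BivariateQuadratic) (x t : ℝ) :
    HasDerivAt (fun s => Q.eval x s) (Q.dt.eval x t) t := by
  have hs : HasDerivAt (fun s : ℝ => (s : ℂ)) 1 t := (hasDerivAt_id t).ofReal_comp
  have h := ((((hs.const_mul (Q.cxt * x)).const_add (Q.cxx * x ^ 2)).add
    ((hs.pow 2).const_mul Q.ctt)).add_const (Q.cx * x)).add (hs.const_mul Q.ct) |>.add_const Q.c0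
  exact h.congr_deriv (by simp only [eval, dt]; push_cast; ring)

end BivariateQuadratic

theorem HasDerivAt.div_mul_of_hasDerivAt_const_mul_self {𝕜 𝕜' : Type*}
    [NontriviallyNormedField 𝕜] [NontriviallyNormedField 𝕜'] [NormedAlgebra 𝕜 𝕜']
    {N D P : 𝕜 → 𝕜'} {N' D' κ : 𝕜'} {x : 𝕜}
    (hN : HasDerivAt N N' x) (hD : HasDerivAt D D' x) (hP : HasDerivAt P (κ * P x) x)
    (hx : D x ≠ 0) :
    HasDerivAt (fun y => N y / D y * P y)
      ((N' * D x - N x * D' + κ * N x * D x) / D x ^ 2 * P x) x := by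
  refine ((hN.div hD hx).mul hP).congr_deriv ?_
  simp only [Pi.div_apply]
  field_simp

noncomputable def planeWave (k ω x t : ℝ) : ℂ := exp (↑(k * x + ω * t) * I)

theorem hasDerivAt_planeWave_fst (k ω x t : ℝ) :
    HasDerivAt (fun y => planeWave k ω y t) (k * I * planeWave k ω x t) x := by
  have hθ : HasDerivAt (fun y : ℝ => (↑(k * y + ω * t) : ℂ) * I) (k * I) x := by
    simpa using (((hasDerivAt_id x).const_mul k).add_const (ω * t)).ofReal_comp.mul_const I
  exact hθ.cexp.congr_deriv (mul_comm _ _)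

theorem hasDerivAt_planeWave_snd (k ω x t : ℝ) :
    HasDerivAt (fun s => planeWave k ω x s) (ω * I * planeWave k ω x t) t := by
  have hθ : HasDerivAt (fun s : ℝ => (↑(k * x + ω * s) : ℂ) * I) (ω * I) t := by
    simpa using (((hasDerivAt_id t).const_mul ω).const_add (k * x)).ofReal_comp.mul_const I
  exact hθ.cexp.congr_deriv (mul_comm _ _)

theorem planeWave_mul_conj (k ω x t : ℝ) :
    planeWave k ω x t * starRingEnd ℂ (planeWave k ω x t) = 1 := by
  rw [mul_conj', planeWave, norm_exp_ofReal_mul_I]; norm_num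

namespace BivariateQuadratic

variable (N D : BivariateQuadratic) (k ω : ℝ)

noncomputable def rationalWave (x t : ℝ) : ℂ := N.eval x t / D.eval x t * planeWave k ω x t

def dxNum (x t : ℝ) : ℂ :=
  N.dx.eval x t * D.eval x t - N.eval x t * D.dx.eval x t + k * I * N.eval x t * D.eval x t

def dxNumDeriv (x t : ℝ) : ℂ :=
  N.dx.dx.eval x t * D.eval x t - N.eval x t * D.dx.dx.eval x t
    + k * I * (N.dx.eval x t * D.eval x t + N.eval x t * D.dx.eval x t)

def dtNum (x t : ℝ) : ℂ :=
  N.dt.eval x t * D.eval x t - N.eval x t * D.dt.eval x t + ω * I * N.eval x t * D.eval x t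

theorem hasDerivAt_dxNum (x t : ℝ) :
    HasDerivAt (fun y => dxNum N D k y t) (dxNumDeriv N D k x t) x := by
  have hN := N.hasDerivAt_eval_fst x t
  have hD := D.hasDerivAt_eval_fst x t
  have h := (((N.dx.hasDerivAt_eval_fst x t).mul hD).sub
    (hN.mul (D.dx.hasDerivAt_eval_fst x t))).add ((hN.const_mul (k * I)).mul hD)
  exact h.congr_deriv (by simp only [dxNumDeriv]; ring)

variable {N D k ω} {x t : ℝ}

theorem px_rationalWave (hD : D.eval x t ≠ 0) :
    px (rationalWave N D k ω) x t = dxNum N D k x t / D.eval x t ^ 2 * planeWave k ω x t :=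
  ((N.hasDerivAt_eval_fst x t).div_mul_of_hasDerivAt_const_mul_self
    (D.hasDerivAt_eval_fst x t) (hasDerivAt_planeWave_fst k ω x t) hD).deriv

theorem pt_rationalWave (hD : D.eval x t ≠ 0) :
    pt (rationalWave N D k ω) x t = dtNum N D ω x t / D.eval x t ^ 2 * planeWave k ω x t :=
  ((N.hasDerivAt_eval_snd x t).div_mul_of_hasDerivAt_const_mul_self
    (D.hasDerivAt_eval_snd x t) (hasDerivAt_planeWave_snd k ω x t) hD).deriv

theorem px_px_rationalWave (hD : D.eval x t ≠ 0) :
    px (px (rationalWave N D k ω)) x t =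
      (dxNumDeriv N D k x t * D.eval x t - 2 * dxNum N D k x t * D.dx.eval x t
        + k * I * dxNum N D k x t * D.eval x t) / D.eval x t ^ 3 * planeWave k ω x t := by
  have hnear : ∀ᶠ y in nhds x, D.eval y t ≠ 0 :=
    (D.hasDerivAt_eval_fst x t).continuousAt.eventually_ne hD
  have hpx : (fun y => px (rationalWave N D k ω) y t) =ᶠ[nhds x]
      fun y => dxNum N D k y t / D.eval y t ^ 2 * planeWave k ω y t :=
    hnear.mono fun y hy => px_rationalWave hy
  have hD2 := (D.hasDerivAt_eval_fst x t).pow 2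
  have h := (hasDerivAt_dxNum N D k x t).div_mul_of_hasDerivAt_const_mul_self hD2
    (hasDerivAt_planeWave_fst k ω x t) (pow_ne_zero 2 hD)
  show deriv (fun y => px (rationalWave N D k ω) y t) x = _
  rw [hpx.deriv_eq]
  refine h.deriv.trans ?_
  simp only [Pi.pow_apply]
  field_simp
  push_cast
  ring

theorem sq_norm_rationalWave :
    ((‖rationalWave N D k ω x t‖ : ℝ) : ℂ) ^ 2
      = N.eval x t * N.conj.eval x t / (D.eval x t * D.conj.eval x t) := by
  rw [← mul_conj', rationalWave, map_mul, map_div₀, N.starRingEnd_eval, D.starRingEnd_eval]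
  calc _ = N.eval x t * N.conj.eval x t / (D.eval x t * D.conj.eval x t)
        * (planeWave k ω x t * starRingEnd ℂ (planeWave k ω x t)) := by ring
    _ = _ := by rw [planeWave_mul_conj, mul_one]

variable (N D k ω x t) in
def dnlsNumerator : ℂ :=
  I * dtNum N D ω x t * D.eval x t * D.conj.eval x t
    + (dxNumDeriv N D k x t * D.eval x t - 2 * dxNum N D k x t * D.dx.eval x t
      + k * I * dxNum N D k x t * D.eval x t) * D.conj.eval x t
    + I * N.eval x t * N.conj.eval x t * dxNum N D k x t

theorem dnlsII_residual_rationalWave (hD : D.eval x t ≠ 0) :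
    I * pt (rationalWave N D k ω) x t + px (px (rationalWave N D k ω)) x t
      + I * ((‖rationalWave N D k ω x t‖ : ℝ) : ℂ) ^ 2 * px (rationalWave N D k ω) x t
      = dnlsNumerator N D k ω x t / (D.eval x t ^ 3 * D.conj.eval x t) * planeWave k ω x t := by
  have hDc : D.conj.eval x t ≠ 0 := by
    rw [← starRingEnd_eval]; exact (map_ne_zero _).mpr hD
  rw [pt_rationalWave hD, px_px_rationalWave hD, sq_norm_rationalWave, px_rationalWave hD,
    dnlsNumerator]
  field_simp

end BivariateQuadratic

open BivariateQuadratic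

def rogueNumerator (α β : ℝ) : BivariateQuadratic :=
  ⟨-2 * β * (16 * I * β ^ 2 * (α ^ 2 + β ^ 2)), -2 * β * (128 * I * β ^ 2 * (α ^ 4 - β ^ 4)),
    -2 * β * (256 * I * β ^ 2 * (α ^ 6 + β ^ 6)), -2 * β * (8 * β ^ 2),
    -2 * β * (96 * α ^ 2 * β ^ 2), -2 * β * (-3 * I)⟩

def rogueDenominator (α β : ℝ) : BivariateQuadratic :=
  ⟨16 * I * β ^ 2 * (α ^ 2 + β ^ 2), 128 * I * β ^ 2 * (α ^ 4 - β ^ 4),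
    256 * I * β ^ 2 * (α ^ 6 + β ^ 6), -8 * β ^ 2, 64 * β ^ 4 - 32 * α ^ 2 * β ^ 2, I⟩

set_option maxRecDepth 10000 in
theorem dnlsNumerator_rogue (α β x t : ℝ) :
    (rogueNumerator α β).dnlsNumerator (rogueDenominator α β) (-2 * α ^ 2)
      (-2 * α ^ 2 * (2 * α ^ 2 - 4 * β ^ 2)) x t = 0 := by
  simp only [dnlsNumerator, dtNum, dxNum, dxNumDeriv, eval, dx, dt, BivariateQuadratic.conj,
    rogueNumerator, rogueDenominator, map_mul, map_add, map_sub, map_neg, map_pow, map_ofNat,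
    conj_I, conj_ofReal]
  push_cast
  ring_nf
  -- `ring_nf` does not know `I ^ 2 = -1`.
  simp only [I_sq, I_pow_three, I_pow_four, show I ^ 5 = I by rw [pow_succ, I_pow_four, one_mul],
    show I ^ 6 = -1 by rw [pow_succ, pow_succ, I_pow_four, one_mul, I_mul_I]]
  ring_nf

theorem first_order_rogue_wave_solves_dnlsII_general (α₁ β₁ : ℝ)
    (L₁ L₂ : ℝ → ℝ → ℂ) (q : ℝ → ℝ → ℂ)
    (hL₁ : ∀ x t : ℝ, L₁ x t =
      16 * Complex.I * (β₁:ℂ)^4 * (x:ℂ)^2 + 16 * Complex.I * (α₁:ℂ)^2 * (β₁:ℂ)^2 * (x:ℂ)^2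
      - 128 * Complex.I * (β₁:ℂ)^6 * (x:ℂ) * (t:ℂ)
      + 128 * Complex.I * (β₁:ℂ)^2 * (α₁:ℂ)^4 * (t:ℂ) * (x:ℂ)
      + 8 * (β₁:ℂ)^2 * (x:ℂ) + 96 * (t:ℂ) * (α₁:ℂ)^2 * (β₁:ℂ)^2
      + 256 * Complex.I * (β₁:ℂ)^2 * (t:ℂ)^2 * (α₁:ℂ)^6 - 3 * Complex.I
      + 256 * Complex.I * (β₁:ℂ)^8 * (t:ℂ)^2)
    (hL₂ : ∀ x t : ℝ, L₂ x t =
      16 * Complex.I * (α₁:ℂ)^2 * (β₁:ℂ)^2 * (x:ℂ)^2 + 16 * Complex.I * (β₁:ℂ)^4 * (x:ℂ)^2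
      + 128 * Complex.I * (β₁:ℂ)^2 * (α₁:ℂ)^4 * (x:ℂ) * (t:ℂ)
      - 128 * Complex.I * (β₁:ℂ)^6 * (x:ℂ) * (t:ℂ) - 8 * (β₁:ℂ)^2 * (x:ℂ)
      + 256 * Complex.I * (β₁:ℂ)^2 * (t:ℂ)^2 * (α₁:ℂ)^6
      + 256 * Complex.I * (β₁:ℂ)^8 * (t:ℂ)^2 - 32 * (t:ℂ) * (α₁:ℂ)^2 * (β₁:ℂ)^2
      + Complex.I + 64 * (t:ℂ) * (β₁:ℂ)^4)
    (hq : ∀ x t : ℝ, q x t = -(L₁ x t / L₂ x t) * 2 * (β₁:ℂ) *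
      Complex.exp (-2 * Complex.I * (α₁:ℂ)^2 * ((x:ℂ) + 2 * (t:ℂ) * (α₁:ℂ)^2 - 4 * (t:ℂ) * (β₁:ℂ)^2))) :
    ∀ x t : ℝ, L₂ x t ≠ 0 →
      Complex.I * pt q x t + px (px q) x t
        + Complex.I * ((‖q x t‖ : ℝ) : ℂ)^2 * px q x t = 0 := by
  intro x t hx
  have hwave : q = (rogueNumerator α₁ β₁).rationalWave (rogueDenominator α₁ β₁) (-2 * α₁ ^ 2)
      (-2 * α₁ ^ 2 * (2 * α₁ ^ 2 - 4 * β₁ ^ 2)) := by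
    funext x t
    rw [hq, hL₁, hL₂, rationalWave, planeWave]
    simp only [eval, rogueNumerator, rogueDenominator]
    congr 1
    · ring
    · congr 1; push_cast; ring
  have hD : (rogueDenominator α₁ β₁).eval x t ≠ 0 := by
    convert hx using 1
    rw [hL₂]; simp only [eval, rogueDenominator]; ring
  rw [hwave, dnlsII_residual_rationalWave hD, dnlsNumerator_rogue, zero_div, zero_mul]

/-- The first-order rogue wave
`q = −(L₁/L₂) · 2β₁ exp(−2iα₁²(x + 2tα₁² − 4tβ₁²))` solves the DNLSII equation
wherever `L₂ ≠ 0`. -/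
theorem first_order_rogue_wave_solves_dnlsII (α₁ β₁ : ℝ) (hβ : β₁ ≠ 0)
    (L₁ L₂ : ℝ → ℝ → ℂ) (q : ℝ → ℝ → ℂ)
    (hL₁ : ∀ x t : ℝ, L₁ x t =
      16 * Complex.I * (β₁:ℂ)^4 * (x:ℂ)^2 + 16 * Complex.I * (α₁:ℂ)^2 * (β₁:ℂ)^2 * (x:ℂ)^2
      - 128 * Complex.I * (β₁:ℂ)^6 * (x:ℂ) * (t:ℂ)
      + 128 * Complex.I * (β₁:ℂ)^2 * (α₁:ℂ)^4 * (t:ℂ) * (x:ℂ)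
      + 8 * (β₁:ℂ)^2 * (x:ℂ) + 96 * (t:ℂ) * (α₁:ℂ)^2 * (β₁:ℂ)^2
      + 256 * Complex.I * (β₁:ℂ)^2 * (t:ℂ)^2 * (α₁:ℂ)^6 - 3 * Complex.I
      + 256 * Complex.I * (β₁:ℂ)^8 * (t:ℂ)^2)
    (hL₂ : ∀ x t : ℝ, L₂ x t =
      16 * Complex.I * (α₁:ℂ)^2 * (β₁:ℂ)^2 * (x:ℂ)^2 + 16 * Complex.I * (β₁:ℂ)^4 * (x:ℂ)^2
      + 128 * Complex.I * (β₁:ℂ)^2 * (α₁:ℂ)^4 * (x:ℂ) * (t:ℂ)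
      - 128 * Complex.I * (β₁:ℂ)^6 * (x:ℂ) * (t:ℂ) - 8 * (β₁:ℂ)^2 * (x:ℂ)
      + 256 * Complex.I * (β₁:ℂ)^2 * (t:ℂ)^2 * (α₁:ℂ)^6
      + 256 * Complex.I * (β₁:ℂ)^8 * (t:ℂ)^2 - 32 * (t:ℂ) * (α₁:ℂ)^2 * (β₁:ℂ)^2
      + Complex.I + 64 * (t:ℂ) * (β₁:ℂ)^4)
    (hq : ∀ x t : ℝ, q x t = -(L₁ x t / L₂ x t) * 2 * (β₁:ℂ) *
      Complex.exp (-2 * Complex.I * (α₁:ℂ)^2 * ((x:ℂ) + 2 * (t:ℂ) * (α₁:ℂ)^2 - 4 * (t:ℂ) * (β₁:ℂ)^2))) :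
    ∀ x t : ℝ, L₂ x t ≠ 0 →
      Complex.I * pt q x t + px (px q) x t
        + Complex.I * ((‖q x t‖ : ℝ) : ℂ)^2 * px q x t = 0 :=
  first_order_rogue_wave_solves_dnlsII_general α₁ β₁ L₁ L₂ q hL₁ hL₂ hq
end

section
/- Suppose r = q*, λ is purely imaginary (λ = −λ*), and Φ = (f, g)ᵀ satisfies Φ_x = (−iλ² + (i/4)qr) J Φ + λ Q Φ with initial condition g(x₀) = f(x₀)* at some point x₀. Then g(x) = f(x)* for all x. -/
open Complex ComplexConjugate

/-!
Put `h = g - f*`, `a = -iλ² + (i/4)|q|²` and `c = λ q*`. Since `λ` and `a` are purely imaginary,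
conjugating the equation for `f` and subtracting it from the one for `g` gives the real-linear
equation `h' = -a h + c h*`, whose Lipschitz constant `|a| + |c|` is continuous in `x`.
As `h(x₀) = 0`, uniqueness of solutions gives `h = 0`.
-/

open scoped NNReal

section Uniqueness

variable {E : Type*} [NormedAddCommGroup E] [NormedSpace ℝ E]

theorem ODE_solution_unique_of_continuous_lipschitz {v : ℝ → E → E} {K : ℝ → ℝ≥0}
    (hK : Continuous K) (hv : ∀ t, LipschitzWith (K t) (v t)) {f g : ℝ → E}
    (hf : ∀ t, HasDerivAt f (v t (f t)) t) (hg : ∀ t, HasDerivAt g (v t (g t)) t)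
    {t₀ : ℝ} (heq : f t₀ = g t₀) : f = g := by
  funext x
  set r := dist x t₀ + 1
  obtain ⟨C, hC⟩ := ((isCompact_closedBall t₀ r).image_of_continuousOn hK.continuousOn).bddAbove
  have hvC : ∀ t ∈ Metric.ball t₀ r, LipschitzOnWith C (v t) Set.univ := fun t ht =>
    ((hv t).weaken (hC ⟨t, Metric.ball_subset_closedBall ht, rfl⟩)).lipschitzOnWith
  rw [Real.ball_eq_Ioo] at hvC
  refine ODE_solution_unique_of_mem_Ioo hvC ?_ (fun t _ => ⟨hf t, trivial⟩)
    (fun t _ => ⟨hg t, trivial⟩) heq ?_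
  · rw [← Real.ball_eq_Ioo]; exact Metric.mem_ball_self (by positivity)
  · rw [← Real.ball_eq_Ioo]; exact Metric.mem_ball.2 (lt_add_one _)

end Uniqueness

theorem lipschitzWith_mul_add_mul_conj (α β : ℂ) :
    LipschitzWith (‖α‖₊ + ‖β‖₊) (fun z => α * z + β * conj z) := by
  refine LipschitzWith.of_dist_le_mul fun z w => ?_
  simp only [dist_eq, NNReal.coe_add, coe_nnnorm]
  calc ‖α * z + β * conj z - (α * w + β * conj w)‖
      = ‖α * (z - w) + β * conj (z - w)‖ := by rw [map_sub]; ring_nf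
    _ ≤ ‖α * (z - w)‖ + ‖β * conj (z - w)‖ := norm_add_le _ _
    _ = (‖α‖ + ‖β‖) * ‖z - w‖ := by rw [norm_mul, norm_mul, RCLike.norm_conj]; ring

theorem hasDerivAt_sub_conj {a c f g : ℝ → ℂ} (ha : ∀ t, conj (a t) = -a t)
    (hf : ∀ t, HasDerivAt f (a t * f t - conj (c t) * g t) t)
    (hg : ∀ t, HasDerivAt g (-a t * g t - c t * f t) t) (t : ℝ) :
    HasDerivAt (fun s => g s - conj (f s))
      (-a t * (g t - conj (f t)) + c t * conj (g t - conj (f t))) t := by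
  have hfc : HasDerivAt (fun s => conj (f s)) (conj (a t * f t - conj (c t) * g t)) t :=
    (hf t).star
  refine ((hg t).sub hfc).congr_deriv ?_
  simp only [map_sub, map_mul, ha, conj_conj]
  ring

/-- For purely imaginary `λ` and `r = q*`, if `(f,g)` solves the `x`-part of the
Lax pair (an ODE in `x`) with `g(x₀) = f(x₀)*`, then `g = f*` identically. -/
theorem lax_ode_conjugate_invariant (q : ℝ → ℂ) (hq : Continuous q)
    (lam : ℂ) (hlam : conj lam = -lam) (f g : ℝ → ℂ) (x₀ : ℝ)
    (hf : ∀ x, HasDerivAt f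
      ((-Complex.I * lam^2 + (Complex.I / 4) * q x * conj (q x)) * f x
        + lam * q x * g x) x)
    (hg : ∀ x, HasDerivAt g
      (-(-Complex.I * lam^2 + (Complex.I / 4) * q x * conj (q x)) * g x
        - lam * conj (q x) * f x) x)
    (h0 : g x₀ = conj (f x₀)) :
    ∀ x, g x = conj (f x) := by
  set a : ℝ → ℂ := fun t => -Complex.I * lam^2 + (Complex.I / 4) * q t * conj (q t)
  set c : ℝ → ℂ := fun t => lam * conj (q t)
  have ha (t : ℝ) : conj (a t) = -a t := by
    simp only [a, map_add, map_mul, map_neg, map_pow, map_div₀, map_ofNat, conj_I, conj_conj,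
      hlam]
    ring
  have hf' (t : ℝ) : HasDerivAt f (a t * f t - conj (c t) * g t) t := by
    convert hf t using 1
    simp only [c, map_mul, conj_conj, hlam]
    ring
  have hK : Continuous fun t => ‖-a t‖₊ + ‖c t‖₊ := by
    have hq' : Continuous fun t => conj (q t) := continuous_conj.comp hq
    fun_prop
  have hzero (t : ℝ) : HasDerivAt (fun _ => (0 : ℂ)) (-a t * 0 + c t * conj 0) t := by
    simpa using hasDerivAt_const t (0 : ℂ)
  have hsub := ODE_solution_unique_of_continuous_lipschitz hK
    (fun t => lipschitzWith_mul_add_mul_conj (-a t) (c t)) (hasDerivAt_sub_conj ha hf' hg) hzero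
    (t₀ := x₀) (by simp [h0])
  exact fun x => sub_eq_zero.1 (congrFun hsub x)
end

section
/- Under the two-fold Darboux transformation with r = q*, λ₂ = −λ₁*, f₂ = g₁*, g₂ = f₁*, the new potential q² = (det[[λ₁g₁, f₁],[λ₂g₂, f₂]] / det[[λ₁f₁, g₁],[λ₂f₂, g₂]]) q − 2i (det[[λ₁²f₁, f₁],[λ₂²f₂, f₂]] / det[[λ₁f₁, g₁],[λ₂f₂, g₂]]) and the analogous r² (with f and g exchanged and q replaced by r) satisfy r² = (q²)*. -/
open Complex ComplexConjugate

/-- Reduction of the two-fold Darboux transformation: with `r = q*`,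
`λ₂ = −λ₁*`, `f₂ = g₁*`, `g₂ = f₁*`, the new potentials satisfy `r² = (q²)*`.
Here the 2×2 determinants are written out explicitly,
`det [[a,b],[c,d]] = a d − b c`. -/
theorem two_fold_DT_reduction (q r f₁ g₁ f₂ g₂ q2 r2 : ℝ → ℝ → ℂ)
    (lam₁ lam₂ : ℂ) (hlam₁ : lam₁ ≠ 0) (hlam₂ : lam₂ = -conj lam₁)
    (hr : ∀ x t, r x t = conj (q x t))
    (hf₂ : ∀ x t, f₂ x t = conj (g₁ x t))
    (hg₂ : ∀ x t, g₂ x t = conj (f₁ x t))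
    (hW : ∀ x t, lam₁ * f₁ x t * g₂ x t - g₁ x t * (lam₂ * f₂ x t) ≠ 0)
    (hWhat : ∀ x t, lam₁ * g₁ x t * f₂ x t - f₁ x t * (lam₂ * g₂ x t) ≠ 0)
    (hq2 : ∀ x t, q2 x t =
      ((lam₁ * g₁ x t * f₂ x t - f₁ x t * (lam₂ * g₂ x t))
        / (lam₁ * f₁ x t * g₂ x t - g₁ x t * (lam₂ * f₂ x t))) * q x t
      - 2 * Complex.I * ((lam₁^2 * f₁ x t * f₂ x t - f₁ x t * (lam₂^2 * f₂ x t))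
        / (lam₁ * f₁ x t * g₂ x t - g₁ x t * (lam₂ * f₂ x t))))
    (hr2 : ∀ x t, r2 x t =
      ((lam₁ * f₁ x t * g₂ x t - g₁ x t * (lam₂ * f₂ x t))
        / (lam₁ * g₁ x t * f₂ x t - f₁ x t * (lam₂ * g₂ x t))) * r x t
      - 2 * Complex.I * ((lam₁^2 * g₁ x t * g₂ x t - g₁ x t * (lam₂^2 * g₂ x t))
        / (lam₁ * g₁ x t * f₂ x t - f₁ x t * (lam₂ * g₂ x t)))) :
    ∀ x t, r2 x t = conj (q2 x t) := by
  intro x t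
  simp only [hr2, hq2, hr, hf₂, hg₂, hlam₂, map_sub, map_mul, map_div₀, map_pow,
    Complex.conj_conj, Complex.conj_I, map_neg, map_ofNat]
  ring
end
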